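/- arXiv:2009.08707 — 2 statements merged into one kernel-verified Lean document; each statement's English description precedes it below -/
import Mathlib

section
/- In the compatible lexicographic product Σ₁[Σ₂] with Σ₂ all-positive or all-negative, for u_i = u_j and non-adjacent v_k ≠ v_l, the signed distance between (u_i,v_k) and (u_i,v_l) equals +2, provided u_i has a neighbor in Σ₁ or v_k and v_l have a common neighbor in Σ₂. -/
open SimpleGraph

/-- The sign of a walk: the product of the signs of its edges. -/
def walkSign {V : Type*} {G : SimpleGraph V} (σ : V → V → ℤ) :
    {u v : V} → G.Walk u v → ℤ
  | _, _, SimpleGraph.Walk.nil => 1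
  | _, _, @SimpleGraph.Walk.cons _ _ a b _ _ p => σ a b * walkSign σ p

/-- A walk is a shortest path if its length equals the distance of its endpoints. -/
def IsShortest {V : Type*} {G : SimpleGraph V} {u v : V} (p : G.Walk u v) : Prop :=
  p.length = G.dist u v

/-- A signed graph is compatible if all shortest paths between any two vertices have
the same sign. -/
def Compatible {V : Type*} (G : SimpleGraph V) (σ : V → V → ℤ) : Prop :=
  ∀ (u v : V) (p q : G.Walk u v), IsShortest p → IsShortest q →
    walkSign σ p = walkSign σ q

/-- The lexicographic product of two graphs: `(a,b) ~ (c,d)` iff `a ~ c`,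
or `a = c` and `b ~ d`. -/
def lexProd {V₁ V₂ : Type*} (G₁ : SimpleGraph V₁) (G₂ : SimpleGraph V₂) :
    SimpleGraph (V₁ × V₂) where
  Adj x y := G₁.Adj x.1 y.1 ∨ (x.1 = y.1 ∧ G₂.Adj x.2 y.2)
  symm := by
    constructor
    rintro x y (h | ⟨h, h2⟩)
    · exact Or.inl h.symm
    · exact Or.inr ⟨h.symm, h2.symm⟩
  loopless := by
    constructor
    rintro x (h | ⟨_, h2⟩)
    · exact G₁.irrefl h
    · exact G₂.irrefl h2

/-- The signature of the lexicographic product of signed graphs. -/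
def lexSign {V₁ V₂ : Type*} [DecidableEq V₁] (σ₁ : V₁ → V₁ → ℤ) (σ₂ : V₂ → V₂ → ℤ) :
    V₁ × V₂ → V₁ × V₂ → ℤ :=
  fun x y => if x.1 = y.1 then σ₂ x.2 y.2 else σ₁ x.1 y.1

theorem SimpleGraph.dist_eq_two_of_adj_of_adj {V : Type*} {G : SimpleGraph V} {u v w : V}
    (huv : u ≠ v) (hnadj : ¬ G.Adj u v) (huw : G.Adj u w) (hwv : G.Adj w v) :
    G.dist u v = 2 := by
  have h : G.edist u v = 2 :=
    G.edist_eq_two_iff.mpr ⟨huv, hnadj, w, G.mem_commonNeighbors.mpr ⟨huw, hwv.symm⟩⟩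
  simp [SimpleGraph.dist, h]

theorem walkSign_cons_cons_nil {V : Type*} {G : SimpleGraph V} (σ : V → V → ℤ) {u v w : V}
    (huv : G.Adj u v) (hvw : G.Adj v w) :
    walkSign σ (Walk.cons huv (Walk.cons hvw Walk.nil)) = σ u v * σ v w := by
  simp [walkSign]

section lexProd

variable {V₁ V₂ : Type*} {G₁ : SimpleGraph V₁} {G₂ : SimpleGraph V₂}

theorem lexProd_adj_of_adj_fst {x y : V₁ × V₂} (h : G₁.Adj x.1 y.1) :
    (lexProd G₁ G₂).Adj x y :=
  Or.inl h

theorem lexProd_adj_mk_left_iff {u : V₁} {v w : V₂} :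
    (lexProd G₁ G₂).Adj (u, v) (u, w) ↔ G₂.Adj v w := by
  simp [lexProd]

variable [DecidableEq V₁] (σ₁ : V₁ → V₁ → ℤ) (σ₂ : V₂ → V₂ → ℤ)

@[simp]
theorem lexSign_mk_left (u : V₁) (v w : V₂) : lexSign σ₁ σ₂ (u, v) (u, w) = σ₂ v w :=
  if_pos rfl

@[simp]
theorem lexSign_of_ne {u u' : V₁} (h : u ≠ u') (v w : V₂) :
    lexSign σ₁ σ₂ (u, v) (u', w) = σ₁ u u' :=
  if_neg h

/-- Whether it leaves the fibre over `u` or stays inside it, a length-two walk from the fibre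
back to it crosses two edges of equal sign, so it is positive. -/
theorem exists_lexProd_adj_adj_lexSign_mul_eq_one
    (hσ₁ : ∀ u v : V₁, G₁.Adj u v → σ₁ u v = 1 ∨ σ₁ u v = -1)
    (hsymm₁ : ∀ u v : V₁, σ₁ u v = σ₁ v u)
    (hconst : (∀ u v : V₂, G₂.Adj u v → σ₂ u v = 1) ∨
      (∀ u v : V₂, G₂.Adj u v → σ₂ u v = -1))
    (u : V₁) {v w : V₂}
    (hnbr : (∃ u' : V₁, G₁.Adj u u') ∨ (∃ z : V₂, G₂.Adj v z ∧ G₂.Adj z w)) :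
    ∃ x : V₁ × V₂, (lexProd G₁ G₂).Adj (u, v) x ∧ (lexProd G₁ G₂).Adj x (u, w) ∧
      lexSign σ₁ σ₂ (u, v) x * lexSign σ₁ σ₂ x (u, w) = 1 := by
  rcases hnbr with ⟨u', hu⟩ | ⟨z, hvz, hzw⟩
  · refine ⟨(u', v), lexProd_adj_of_adj_fst hu, lexProd_adj_of_adj_fst hu.symm, ?_⟩
    rw [lexSign_of_ne _ _ hu.ne, lexSign_of_ne _ _ hu.ne.symm, hsymm₁ u' u]
    exact Int.isUnit_mul_self (Int.isUnit_iff.mpr (hσ₁ u u' hu))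
  · refine ⟨(u, z), lexProd_adj_mk_left_iff.mpr hvz, lexProd_adj_mk_left_iff.mpr hzw, ?_⟩
    rcases hconst with h | h <;> simp [h _ _ hvz, h _ _ hzw]

end lexProd

theorem lexProd_fiber_distance_general {V₁ V₂ : Type*} [DecidableEq V₁]
    (G₁ : SimpleGraph V₁) (G₂ : SimpleGraph V₂)
    (σ₁ : V₁ → V₁ → ℤ) (σ₂ : V₂ → V₂ → ℤ)
    (hσ₁ : ∀ u v : V₁, G₁.Adj u v → σ₁ u v = 1 ∨ σ₁ u v = -1)
    (hsymm₁ : ∀ u v : V₁, σ₁ u v = σ₁ v u)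
    (hconst : (∀ u v : V₂, G₂.Adj u v → σ₂ u v = 1) ∨
      (∀ u v : V₂, G₂.Adj u v → σ₂ u v = -1))
    (hc : Compatible (lexProd G₁ G₂) (lexSign σ₁ σ₂))
    (uᵢ : V₁) (vₖ vₗ : V₂) (hne : vₖ ≠ vₗ) (hnadj : ¬ G₂.Adj vₖ vₗ)
    (hnbr : (∃ u : V₁, G₁.Adj uᵢ u) ∨ (∃ w : V₂, G₂.Adj vₖ w ∧ G₂.Adj w vₗ)) :
    (lexProd G₁ G₂).dist (uᵢ, vₖ) (uᵢ, vₗ) = 2 ∧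
      ∀ P : (lexProd G₁ G₂).Walk (uᵢ, vₖ) (uᵢ, vₗ), IsShortest P →
        walkSign (lexSign σ₁ σ₂) P = 1 := by
  obtain ⟨x, h₁, h₂, hsign⟩ :=
    exists_lexProd_adj_adj_lexSign_mul_eq_one σ₁ σ₂ hσ₁ hsymm₁ hconst uᵢ hnbr
  have hdist : (lexProd G₁ G₂).dist (uᵢ, vₖ) (uᵢ, vₗ) = 2 :=
    SimpleGraph.dist_eq_two_of_adj_of_adj (by simpa using hne)
      (mt lexProd_adj_mk_left_iff.mp hnadj) h₁ h₂
  let W := Walk.cons h₁ (Walk.cons h₂ Walk.nil)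
  have hW : IsShortest W := hdist.symm
  refine ⟨hdist, fun P hP => ?_⟩
  rw [hc _ _ P W hP hW, walkSign_cons_cons_nil, hsign]

/-- In the compatible lexicographic product `Σ₁[Σ₂]` with `Σ₂` all-positive or
all-negative, for `u_i = u_j` and non-adjacent `v_k ≠ v_l`, the signed distance between
`(u_i,v_k)` and `(u_i,v_l)` equals `+2` (distance `2` and every shortest path positive),
provided `u_i` has a neighbour in `Σ₁` or `v_k` and `v_l` have a common neighbour
in `Σ₂`. -/
theorem lexProd_fiber_distance {V₁ V₂ : Type*} [DecidableEq V₁]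
    (G₁ : SimpleGraph V₁) (G₂ : SimpleGraph V₂)
    (σ₁ : V₁ → V₁ → ℤ) (σ₂ : V₂ → V₂ → ℤ)
    (hσ₁ : ∀ u v : V₁, G₁.Adj u v → σ₁ u v = 1 ∨ σ₁ u v = -1)
    (hσ₂ : ∀ u v : V₂, G₂.Adj u v → σ₂ u v = 1 ∨ σ₂ u v = -1)
    (hsymm₁ : ∀ u v : V₁, σ₁ u v = σ₁ v u) (hsymm₂ : ∀ u v : V₂, σ₂ u v = σ₂ v u)
    (hconst : (∀ u v : V₂, G₂.Adj u v → σ₂ u v = 1) ∨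
      (∀ u v : V₂, G₂.Adj u v → σ₂ u v = -1))
    (hc : Compatible (lexProd G₁ G₂) (lexSign σ₁ σ₂))
    (uᵢ : V₁) (vₖ vₗ : V₂) (hne : vₖ ≠ vₗ) (hnadj : ¬ G₂.Adj vₖ vₗ)
    (hnbr : (∃ u : V₁, G₁.Adj uᵢ u) ∨ (∃ w : V₂, G₂.Adj vₖ w ∧ G₂.Adj w vₗ)) :
    (lexProd G₁ G₂).dist (uᵢ, vₖ) (uᵢ, vₗ) = 2 ∧
      ∀ P : (lexProd G₁ G₂).Walk (uᵢ, vₖ) (uᵢ, vₗ), IsShortest P →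
        walkSign (lexSign σ₁ σ₂) P = 1 :=
  lexProd_fiber_distance_general G₁ G₂ σ₁ σ₂ hσ₁ hsymm₁ hconst hc uᵢ vₖ vₗ hne hnadj hnbr
end

section
/- Let Σ₁ be a compatible signed graph on m vertices with signed distance matrix eigenvalues λ₁ ≥ … ≥ λ_m, and let Σ₂ be the single negative edge K₂⁻. Then the signed distance matrix of the lexicographic product Σ₁[Σ₂] has eigenvalues 2λ_i − 1 for 1 ≤ i ≤ m, together with +1 of multiplicity m. -/
open SimpleGraph

open Polynomial

/-!
Between different fibres `{u} × Fin 2` and `{v} × Fin 2` the distance in `Σ₁[K₂⁻]` is the one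
in `Σ₁`: a shortest `u`–`v` path of `Σ₁` lifts to one of the same length and sign that switches
fibre along its first edge, and projecting any walk of the product back to `Σ₁` does not make it
longer. Within a fibre the two copies are joined by a negative edge. Hence
`D(Σ₁[K₂⁻]) = D(Σ₁) ⊗ J₂ + I ⊗ D(K₂⁻)`, and since `[[1, 1], [1, -1]]` diagonalises `J₂` and
`D(K₂⁻)` simultaneously, with eigenvalue pairs `(2, -1)` and `(0, 1)`, this matrix is similar to
the block diagonal matrix `diag(2 D(Σ₁) - I, I)`.
-/

open Matrix Kronecker

namespace Matrix

section CommRing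

variable {R : Type*} [CommRing R] {n o : Type*} [Fintype n] [DecidableEq n]
  [Fintype o] [DecidableEq o]

theorem charpoly_blockDiagonal (M : o → Matrix n n R) :
    (blockDiagonal M).charpoly = ∏ k, (M k).charpoly := by
  have : charmatrix (blockDiagonal M) = blockDiagonal fun k => charmatrix (M k) := by
    ext ⟨i, k⟩ ⟨j, k'⟩
    by_cases hk : k = k' <;> by_cases hij : i = j <;>
      simp [blockDiagonal_apply, hk, hij]
  rw [charpoly, this, det_blockDiagonal]
  rfl

theorem charpoly_kronecker_add_one_kronecker_of_conj (A : Matrix n n R)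
    {B E P Q : Matrix o o R} {a b : o → R} (hPQ : P * Q = 1)
    (hB : Q * B * P = diagonal a) (hE : Q * E * P = diagonal b) :
    (A ⊗ₖ B + 1 ⊗ₖ E).charpoly = ∏ k, (a k • A + b k • 1).charpoly := by
  have hconj : (1 ⊗ₖ Q) * (A ⊗ₖ B + 1 ⊗ₖ E) * (1 ⊗ₖ P) =
      blockDiagonal fun k => a k • A + b k • (1 : Matrix n n R) := by
    simp only [Matrix.mul_add, Matrix.add_mul, ← mul_kronecker_mul, Matrix.one_mul,
      Matrix.mul_one, hB, hE, kronecker_diagonal, ← blockDiagonal_add, op_smul_eq_smul]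
    rfl
  rw [← charpoly_blockDiagonal, ← hconj, charpoly_mul_comm, ← Matrix.mul_assoc,
    ← mul_kronecker_mul, Matrix.mul_one, hPQ, one_kronecker_one, Matrix.one_mul]

end CommRing

section Field

variable {K : Type*} [Field K] {n : Type*} [Fintype n] [DecidableEq n]

theorem charpoly_smul (A : Matrix n n K) {c : K} (hc : c ≠ 0) :
    (c • A).charpoly = C c ^ Fintype.card n * A.charpoly.comp (C c⁻¹ * X) := by
  have : charmatrix (c • A) = C c • (charmatrix A).map (compRingHom (C c⁻¹ * X)) := by
    have hcc : C c * C c⁻¹ = 1 := by rw [← C_mul, mul_inv_cancel₀ hc, C_1]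
    refine Matrix.ext fun i j => ?_
    by_cases hij : i = j
    · subst hij
      simp only [charmatrix_apply_eq, smul_apply, map_apply, coe_compRingHom_apply, sub_comp,
        X_comp, C_comp, smul_eq_mul, C_mul]
      linear_combination (-X : K[X]) * hcc
    · simp [charmatrix_apply_ne _ _ _ hij]
  rw [charpoly, this, det_smul, charpoly, ← coe_compRingHom_apply, RingHom.map_det,
    RingHom.mapMatrix_apply]

theorem charpoly_smul_add_smul_one_of_charpoly_eq_prod {ι : Type*} [Fintype ι]
    {A : Matrix n n K} {lam : ι → K} (h : A.charpoly = ∏ i, (X - C (lam i)))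
    {c : K} (hc : c ≠ 0) (d : K) :
    (c • A + d • 1).charpoly = ∏ i, (X - C (c * lam i + d)) := by
  have hcard : Fintype.card n = Fintype.card ι := by
    simpa using congrArg natDegree h
  have hcc : C c * C c⁻¹ = 1 := by rw [← C_mul, mul_inv_cancel₀ hc, C_1]
  have : c • A + d • (1 : Matrix n n K) = c • A - scalar n (-d) := by
    simp [sub_eq_add_neg, smul_one_eq_diagonal]
  rw [this, charpoly_sub_scalar, charpoly_smul A hc, h, hcard, ← Finset.card_univ,
    ← Finset.prod_const, prod_comp, ← Finset.prod_mul_distrib, prod_comp]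
  refine Finset.prod_congr rfl fun i _ => ?_
  simp only [sub_comp, X_comp, C_comp, mul_comp, map_add, map_mul, map_neg]
  linear_combination (X - C d) * hcc

theorem charpoly_kronecker_allOnes_add_one_kronecker_negSwap (A : Matrix n n K)
    (h2 : (2 : K) ≠ 0) :
    (A ⊗ₖ of (fun _ _ : Fin 2 => (1 : K)) + 1 ⊗ₖ !![0, -1; -1, 0]).charpoly =
      ((2 : K) • A + (-1 : K) • 1).charpoly * (1 : Matrix n n K).charpoly := by
  have hhalf : (2⁻¹ : K) + 2⁻¹ = 1 := by rw [← two_mul, mul_inv_cancel₀ h2]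
  rw [charpoly_kronecker_add_one_kronecker_of_conj A (P := !![1, 1; 1, -1])
    (Q := !![2⁻¹, 2⁻¹; 2⁻¹, -2⁻¹]) (a := ![2, 0]) (b := ![-1, 1]) ?_ ?_ ?_, Fin.prod_univ_two]
  · simp
  all_goals
    ext i j
    fin_cases i <;> fin_cases j <;>
      simp [mul_apply, Fin.sum_univ_two, vecHead, vecTail, hhalf, ← neg_add, one_add_one_eq_two]

end Field

end Matrix

section LexProd

variable {V₁ V₂ : Type*} {G₁ : SimpleGraph V₁} {G₂ : SimpleGraph V₂}

@[simps]
def lexProdLayer (G₁ : SimpleGraph V₁) (G₂ : SimpleGraph V₂) (j : V₂) : G₁ →g lexProd G₁ G₂ where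
  toFun u := (u, j)
  map_rel' h := Or.inl h

theorem walkSign_map_lexProdLayer [DecidableEq V₁] (σ₁ : V₁ → V₁ → ℤ) (σ₂ : V₂ → V₂ → ℤ)
    (j : V₂) {u v : V₁} (p : G₁.Walk u v) :
    walkSign (lexSign σ₁ σ₂) (p.map (lexProdLayer G₁ G₂ j)) = walkSign σ₁ p := by
  induction p with
  | nil => rfl
  | cons h p ih => simp [walkSign, lexSign, h.ne, ih]

theorem exists_lexProd_walk_of_not_nil [DecidableEq V₁] (σ₁ : V₁ → V₁ → ℤ) (σ₂ : V₂ → V₂ → ℤ)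
    {u v : V₁} (p : G₁.Walk u v) (hp : ¬p.Nil) (i j : V₂) :
    ∃ P : (lexProd G₁ G₂).Walk (u, i) (v, j),
      P.length = p.length ∧ walkSign (lexSign σ₁ σ₂) P = walkSign σ₁ p := by
  cases p with
  | nil => exact absurd Walk.Nil.nil hp
  | @cons _ w _ h p =>
    have hadj : (lexProd G₁ G₂).Adj (u, i) (lexProdLayer G₁ G₂ j w) := Or.inl h
    exact ⟨.cons hadj (p.map (lexProdLayer G₁ G₂ j)), congrArg (· + 1) (p.length_map _),
      congrArg₂ (· * ·) (if_neg h.ne) (walkSign_map_lexProdLayer σ₁ σ₂ j p)⟩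

theorem exists_walk_length_le_of_lexProd_walk {x y : V₁ × V₂} (P : (lexProd G₁ G₂).Walk x y) :
    ∃ p : G₁.Walk x.1 y.1, p.length ≤ P.length := by
  induction P with
  | nil => exact ⟨.nil, le_rfl⟩
  | cons h P ih =>
    obtain ⟨p, hp⟩ := ih
    rw [Walk.length_cons]
    rcases h with h | ⟨h, -⟩
    · exact ⟨.cons h p, by simpa using hp⟩
    · exact ⟨p.copy h.symm rfl, by simpa using hp.trans (Nat.le_succ _)⟩

theorem dist_le_dist_lexProd {x y : V₁ × V₂} (h : (lexProd G₁ G₂).Reachable x y) :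
    G₁.dist x.1 y.1 ≤ (lexProd G₁ G₂).dist x y := by
  obtain ⟨P, hP⟩ := h.exists_walk_length_eq_dist
  obtain ⟨p, hp⟩ := exists_walk_length_le_of_lexProd_walk P
  exact (dist_le p).trans (hP ▸ hp)

theorem dist_lexProd_of_ne (hG₁ : G₁.Connected) {u v : V₁} (huv : u ≠ v) (i j : V₂) :
    (lexProd G₁ G₂).dist (u, i) (v, j) = G₁.dist u v := by
  classical
  obtain ⟨p, hp⟩ := hG₁.exists_walk_length_eq_dist u v
  obtain ⟨P, hP, -⟩ := exists_lexProd_walk_of_not_nil 0 0 p (Walk.not_nil_of_ne huv) i j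
  exact le_antisymm (hp ▸ hP ▸ dist_le P) (dist_le_dist_lexProd P.reachable)

end LexProd

section SignedDistance

variable {V₁ V₂ : Type*} {G₁ : SimpleGraph V₁}

/-- The signed distance matrix `D(Σ)`, where `s u v` is the common sign of the shortest `u`–`v`
paths. -/
noncomputable def signedDistMatrix {V : Type*} (G : SimpleGraph V) (s : V → V → ℤ) : Matrix V V ℝ :=
  of fun u v => (s u v : ℝ) * (G.dist u v : ℝ)

theorem signedDistMatrix_lexProd_top [DecidableEq V₁] [DecidableEq V₂] (hG₁ : G₁.Connected)
    {σ₁ : V₁ → V₁ → ℤ} {σ₂ : V₂ → V₂ → ℤ} {s₁ : V₁ → V₁ → ℤ} {sL : V₁ × V₂ → V₁ × V₂ → ℤ}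
    (hs₁ : ∀ (u v : V₁) (p : G₁.Walk u v), IsShortest p → walkSign σ₁ p = s₁ u v)
    (hsL : ∀ (x y : V₁ × V₂) (P : (lexProd G₁ (⊤ : SimpleGraph V₂)).Walk x y), IsShortest P →
        walkSign (lexSign σ₁ σ₂) P = sL x y) :
    signedDistMatrix (lexProd G₁ ⊤) sL =
      signedDistMatrix G₁ s₁ ⊗ₖ of (fun _ _ => 1) +
        1 ⊗ₖ of fun i j => if i = j then 0 else (σ₂ i j : ℝ) := by
  ext ⟨u, i⟩ ⟨v, j⟩
  rcases eq_or_ne u v with rfl | huv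
  · rcases eq_or_ne i j with rfl | hij
    · simp [signedDistMatrix]
    · have hadj : (lexProd G₁ ⊤).Adj (u, i) (u, j) := Or.inr ⟨rfl, hij⟩
      have hdist := dist_eq_one_iff_adj.mpr hadj
      have hshort : IsShortest hadj.toWalk := hdist.symm
      rw [signedDistMatrix, of_apply, ← hsL _ _ _ hshort, hdist]
      simp [signedDistMatrix, walkSign, lexSign, hij]
  · obtain ⟨p, hp⟩ := hG₁.exists_walk_length_eq_dist u v
    obtain ⟨P, hP, hsign⟩ :=
      exists_lexProd_walk_of_not_nil σ₁ σ₂ p (Walk.not_nil_of_ne huv) i j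
    have hdist := dist_lexProd_of_ne (G₂ := ⊤) hG₁ huv i j
    have hshort : IsShortest P := by rw [IsShortest, hP, hp, hdist]
    rw [signedDistMatrix, of_apply, ← hsL _ _ _ hshort, hsign, hs₁ _ _ _ hp, hdist]
    simp [signedDistMatrix, huv]

end SignedDistance

theorem lexProd_K2neg_distance_spectrum_general {V₁ : Type*} [Fintype V₁] [DecidableEq V₁]
    {m : ℕ} (hcard : Fintype.card V₁ = m)
    (G₁ : SimpleGraph V₁) (h₁ : G₁.Connected)
    (σ₁ : V₁ → V₁ → ℤ)
    -- `Σ₁` is compatible with common shortest-path signs `s₁`: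
    (s₁ : V₁ → V₁ → ℤ)
    (hs₁ : ∀ (u v : V₁) (p : G₁.Walk u v), IsShortest p → walkSign σ₁ p = s₁ u v)
    -- the eigenvalues `λ₁ ≥ … ≥ λ_m` of the signed distance matrix of `Σ₁`:
    (lam : Fin m → ℝ)
    (hchar : (Matrix.of fun u v : V₁ => (s₁ u v : ℝ) * (G₁.dist u v : ℝ)).charpoly =
      ∏ i : Fin m, (X - C (lam i)))
    -- `Σ₂ = K₂⁻`, a single negative edge:
    (σ₂ : Fin 2 → Fin 2 → ℤ) (hσ₂ : ∀ u v : Fin 2, σ₂ u v = -1)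
    -- the lexicographic product is compatible, with common shortest-path sign `sL`:
    (sL : V₁ × Fin 2 → V₁ × Fin 2 → ℤ)
    (hsL : ∀ (x y : V₁ × Fin 2)
      (P : (lexProd G₁ (⊤ : SimpleGraph (Fin 2))).Walk x y), IsShortest P →
        walkSign (lexSign σ₁ σ₂) P = sL x y) :
    (Matrix.of fun x y : V₁ × Fin 2 =>
        (sL x y : ℝ) * ((lexProd G₁ (⊤ : SimpleGraph (Fin 2))).dist x y : ℝ)).charpoly =
      (∏ i : Fin m, (X - C (2 * lam i - 1))) * (X - 1) ^ m := by
  have hK₂ : (of fun i j : Fin 2 => if i = j then 0 else (σ₂ i j : ℝ)) = !![0, -1; -1, 0] := by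
    ext i j
    fin_cases i <;> fin_cases j <;> simp [hσ₂]
  change (signedDistMatrix G₁ s₁).charpoly = _ at hchar
  change (signedDistMatrix (lexProd G₁ ⊤) sL).charpoly = _
  rw [signedDistMatrix_lexProd_top h₁ hs₁ hsL, hK₂,
    charpoly_kronecker_allOnes_add_one_kronecker_negSwap _ two_ne_zero,
    charpoly_smul_add_smul_one_of_charpoly_eq_prod hchar two_ne_zero, charpoly_one, hcard]
  simp [sub_eq_add_neg]

/-- Signed distance spectrum of the lexicographic product `Σ₁[K₂⁻]`:
if `Σ₁` is a compatible signed graph on `m` vertices whose signed distance matrix has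
eigenvalues `λ₁ ≥ … ≥ λ_m`, then `D(Σ₁[K₂⁻])` has eigenvalues `2λᵢ − 1` (for each `i`)
together with `+1` of multiplicity `m` (stated via the characteristic polynomial). -/
theorem lexProd_K2neg_distance_spectrum {V₁ : Type*} [Fintype V₁] [DecidableEq V₁]
    {m : ℕ} (hcard : Fintype.card V₁ = m)
    (G₁ : SimpleGraph V₁) (h₁ : G₁.Connected)
    (σ₁ : V₁ → V₁ → ℤ)
    (hσ₁ : ∀ u v : V₁, G₁.Adj u v → σ₁ u v = 1 ∨ σ₁ u v = -1)
    (hsymm₁ : ∀ u v : V₁, σ₁ u v = σ₁ v u)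
    -- `Σ₁` is compatible with common shortest-path signs `s₁`:
    (s₁ : V₁ → V₁ → ℤ)
    (hs₁ : ∀ (u v : V₁) (p : G₁.Walk u v), IsShortest p → walkSign σ₁ p = s₁ u v)
    -- the eigenvalues `λ₁ ≥ … ≥ λ_m` of the signed distance matrix of `Σ₁`:
    (lam : Fin m → ℝ) (hord : ∀ i j : Fin m, i ≤ j → lam j ≤ lam i)
    (hchar : (Matrix.of fun u v : V₁ => (s₁ u v : ℝ) * (G₁.dist u v : ℝ)).charpoly =
      ∏ i : Fin m, (X - C (lam i)))
    -- `Σ₂ = K₂⁻`, a single negative edge: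
    (σ₂ : Fin 2 → Fin 2 → ℤ) (hσ₂ : ∀ u v : Fin 2, σ₂ u v = -1)
    -- the lexicographic product is compatible, with common shortest-path sign `sL`:
    (sL : V₁ × Fin 2 → V₁ × Fin 2 → ℤ)
    (hsL : ∀ (x y : V₁ × Fin 2)
      (P : (lexProd G₁ (⊤ : SimpleGraph (Fin 2))).Walk x y), IsShortest P →
        walkSign (lexSign σ₁ σ₂) P = sL x y) :
    (Matrix.of fun x y : V₁ × Fin 2 =>
        (sL x y : ℝ) * ((lexProd G₁ (⊤ : SimpleGraph (Fin 2))).dist x y : ℝ)).charpoly =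
      (∏ i : Fin m, (X - C (2 * lam i - 1))) * (X - 1) ^ m :=
  lexProd_K2neg_distance_spectrum_general hcard G₁ h₁ σ₁ s₁ hs₁ lam hchar σ₂ hσ₂ sL hsL
end
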